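/- arXiv:2001.07203 — 3 statements merged into one kernel-verified Lean document; each statement's English description precedes it below -/
import Mathlib

section
/- The gradient of the policy-conditioned free energy F_π with respect to the sufficient statistics s_{πτ} (for 1 < τ ≤ t) equals 1 + log s_{πτ} - (o_τ · log A + s_{π,τ+1} · log B_{π_τ} + log(B_{π_{τ-1}}) s_{π,τ-1}), i.e., the stated prediction-error expression. -/
/-!
Differentiate `F_π` along the coordinate line `y ↦ s` with `s_{πτ,i}` replaced by `y`. Along any
curve, the product and chain rules give the derivative of `F_π` as a sum over all entries of the
velocity; here the velocity is the unit vector at `(τ, i)`, so only the entropy and observation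
terms at step `τ`, and the two transition terms linking `τ` to its neighbours `τ - 1` and `τ + 1`,
survive. The prior term `s_{π1}·log D` does not, because `τ ≠ 1`.
-/

open Finset Real Function

theorem hasDerivAt_update_update_apply {ι κ : Type*} [DecidableEq ι] [DecidableEq κ]
    (v : ι → κ → ℝ) (τ : ι) (i : κ) (k : ι) (j : κ) (y : ℝ) :
    HasDerivAt (fun y => update v τ (update (v τ) i y) k j)
      ((Pi.single τ (Pi.single i 1) : ι → κ → ℝ) k j) y := by
  rcases eq_or_ne k τ with rfl | hk
  · simpa using hasDerivAt_pi.1 (hasDerivAt_update (v k) i y) j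
  · simpa [hk] using hasDerivAt_const y (v k j)

/-- `w k` stands for `s_{πk}`, and `B k` for the transition matrix `B_{π_{k-1}}` from step `k - 1`
to step `k`. -/
noncomputable def freeEnergy {m n : ℕ} (T t : ℕ) (o : ℕ → Fin n → ℝ) (A : Fin n → Fin m → ℝ)
    (B : ℕ → Fin m → Fin m → ℝ) (D : Fin m → ℝ) (w : ℕ → Fin m → ℝ) : ℝ :=
  (∑ k ∈ Icc 1 T, ∑ j, w k j * log (w k j))
  - (∑ k ∈ Icc 1 t, ∑ jo, o k jo * ∑ j, log (A jo j) * w k j)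
  - (∑ j, w 1 j * log (D j))
  - (∑ k ∈ Icc 2 T, ∑ j, ∑ j', w k j * log (B k j j') * w (k - 1) j')

theorem hasDerivAt_freeEnergy_comp {m n : ℕ} (T t : ℕ) (o : ℕ → Fin n → ℝ)
    (A : Fin n → Fin m → ℝ) (B : ℕ → Fin m → Fin m → ℝ) (D : Fin m → ℝ)
    {γ : ℝ → ℕ → Fin m → ℝ} {γ' : ℕ → Fin m → ℝ} {x : ℝ}
    (hγ : ∀ k j, HasDerivAt (fun y => γ y k j) (γ' k j) x)
    (hγx : ∀ k ∈ Icc 1 T, ∀ j, γ x k j ≠ 0) :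
    HasDerivAt (fun y => freeEnergy T t o A B D (γ y))
      ((∑ k ∈ Icc 1 T, ∑ j, (log (γ x k j) + 1) * γ' k j)
        - (∑ k ∈ Icc 1 t, ∑ jo, o k jo * ∑ j, log (A jo j) * γ' k j)
        - (∑ j, γ' 1 j * log (D j))
        - (∑ k ∈ Icc 2 T, ∑ j, ∑ j', (γ' k j * log (B k j j') * γ x (k - 1) j'
            + γ x k j * log (B k j j') * γ' (k - 1) j')))
      x := by
  have entropy : ∀ k ∈ Icc 1 T, ∀ j,
      HasDerivAt (fun y => γ y k j * log (γ y k j)) ((log (γ x k j) + 1) * γ' k j) x :=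
    fun k hk j => HasDerivAt.comp (h₂ := fun u => u * log u) x
      (hasDerivAt_mul_log (hγx k hk j)) (hγ k j)
  exact (((HasDerivAt.fun_sum fun k hk => HasDerivAt.fun_sum fun j _ => entropy k hk j).sub
    (HasDerivAt.fun_sum fun k _ => HasDerivAt.fun_sum fun jo _ =>
      (HasDerivAt.fun_sum fun j _ => (hγ k j).const_mul _).const_mul _)).sub
    (HasDerivAt.fun_sum fun j _ => (hγ 1 j).mul_const _)).sub
    (HasDerivAt.fun_sum fun k _ => HasDerivAt.fun_sum fun j _ => HasDerivAt.fun_sum fun j' _ =>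
      ((hγ k j).mul_const _).mul (hγ (k - 1) j'))

theorem free_energy_gradient_perception_general
    (m n T t τ : ℕ) (hτ1 : 1 < τ) (hτt : τ ≤ t) (hτT : τ < T)
    (sv : ℕ → Fin m → ℝ) (o : ℕ → Fin n → ℝ)
    (A : Fin n → Fin m → ℝ) (B : ℕ → Fin m → Fin m → ℝ) (D : Fin m → ℝ)
    (hs : ∀ k i, 0 < sv k i)
    (i : Fin m) :
    HasDerivAt
      (fun y : ℝ =>
        (fun w : ℕ → Fin m → ℝ =>
          (∑ k ∈ Finset.Icc 1 T, ∑ j, w k j * Real.log (w k j))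
          - (∑ k ∈ Finset.Icc 1 t, ∑ jo, o k jo * ∑ j, Real.log (A jo j) * w k j)
          - (∑ j, w 1 j * Real.log (D j))
          - (∑ k ∈ Finset.Icc 2 T, ∑ j, ∑ j',
              w k j * Real.log (B k j j') * w (k - 1) j'))
        (Function.update sv τ (Function.update (sv τ) i y)))
      (1 + Real.log (sv τ i)
        - ((∑ jo, o τ jo * Real.log (A jo i))
          + (∑ j', sv (τ + 1) j' * Real.log (B (τ + 1) j' i))
          + (∑ j', Real.log (B τ i j') * sv (τ - 1) j')))
      (sv τ i) := by
  have hderiv := hasDerivAt_freeEnergy_comp T t o A B D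
    (hasDerivAt_update_update_apply sv τ i · · (sv τ i)) (fun k _ j => by simpa using (hs k j).ne')
  simp only [update_eq_self] at hderiv
  refine hderiv.congr_deriv ?_
  have hτ2 : 2 ≤ τ := hτ1
  have hτ_ne_one : 1 ≠ τ := hτ1.ne
  have hpred_eq : ∀ k, k - 1 = τ ↔ k = τ + 1 := by omega
  simp [Pi.single_apply, ite_apply, hpred_eq, hτ_ne_one, sum_add_distrib, hτ1.le, hτ2, hτt,
    hτT.le, Nat.succ_le_of_lt hτT]
  ring

/-- The partial derivative (gradient component) of the policy-conditioned free energy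
`F_π(s_{π1},…,s_{πT}) = ∑_{τ=1}^T s_{πτ}·log s_{πτ} - ∑_{τ=1}^t o_τ·(log A) s_{πτ}
  - s_{π1}·log D - ∑_{τ=2}^T s_{πτ}·(log B_{π_{τ-1}}) s_{π,τ-1}`
with respect to the `i`-th component of `s_{πτ}`, for `1 < τ ≤ t` (and `τ < T`), equals
`1 + log s_{πτ,i} - (o_τ·log A + s_{π,τ+1}·log B_{π_τ} + (log B_{π_{τ-1}}) s_{π,τ-1})_i`.
Here `B k` denotes the transition matrix `B_{π_{k-1}}` used between steps `k-1` and `k`. -/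
theorem free_energy_gradient_perception
    (m n T t τ : ℕ) (hτ1 : 1 < τ) (hτt : τ ≤ t) (hτT : τ < T) (htT : t ≤ T)
    (sv : ℕ → Fin m → ℝ) (o : ℕ → Fin n → ℝ)
    (A : Fin n → Fin m → ℝ) (B : ℕ → Fin m → Fin m → ℝ) (D : Fin m → ℝ)
    (hs : ∀ k i, 0 < sv k i) (hA : ∀ j i, 0 < A j i)
    (hB : ∀ k i i', 0 < B k i i') (hD : ∀ i, 0 < D i)
    (i : Fin m) :
    HasDerivAt
      (fun y : ℝ =>
        (fun w : ℕ → Fin m → ℝ =>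
          (∑ k ∈ Finset.Icc 1 T, ∑ j, w k j * Real.log (w k j))
          - (∑ k ∈ Finset.Icc 1 t, ∑ jo, o k jo * ∑ j, Real.log (A jo j) * w k j)
          - (∑ j, w 1 j * Real.log (D j))
          - (∑ k ∈ Finset.Icc 2 T, ∑ j, ∑ j',
              w k j * Real.log (B k j j') * w (k - 1) j'))
        (Function.update sv τ (Function.update (sv τ) i y)))
      (1 + Real.log (sv τ i)
        - ((∑ jo, o τ jo * Real.log (A jo i))
          + (∑ j', sv (τ + 1) j' * Real.log (B (τ + 1) j' i))
          + (∑ j', Real.log (B τ i j') * sv (τ - 1) j')))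
      (sv τ i) :=
  free_energy_gradient_perception_general m n T t τ hτ1 hτt hτT sv o A B D hs i
end

section
/- The expected free energy G(π) = D_KL[Q(s_τ|π)||P(s_τ)] + E_{Q(s_τ|π)}[H[P(o_τ|s_τ)]] (risk plus ambiguity) equals E_Q[D_KL[Q(s_τ|o_τ,π)||P(s_τ|o_τ)]] - E_Q[log P(o_τ)] - E_Q[D_KL[Q(s_τ|o_τ,π)||Q(s_τ|π)]] (expected evidence bound minus expected log evidence minus expected information gain). -/
open BigOperators Finset

/-!
Expand every logarithm. After multiplying out the normalisations by `Q(o|π)`, each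
observation `o` contributes `∑_s P(o|s) Q(s|π) (log (Q(s|π) / P(s)) - log P(o|s))`: the two
divergences from the posterior `Q(s|o,π)` differ by `E[log (Q(s|π) / P(s|o))]`, and the
`log P(o)` hidden in `P(s|o)` cancels the expected log evidence. Summing over `o` first and
using `∑_o P(o|s) = 1` gives risk plus ambiguity.
-/

open Real in
theorem Real.log_div_sub_log_div {a b c : ℝ} (ha : a ≠ 0) (hb : b ≠ 0) (hc : c ≠ 0) :
    log (a / b) - log (a / c) = log (c / b) := by
  rw [log_div ha hb, log_div ha hc, log_div hc hb]
  ring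

theorem Finset.sum_mul_sum_div_sum_mul {ι K : Type*} [Field K] [LinearOrder K]
    [IsStrictOrderedRing K] (s : Finset ι) {w : ι → K} (hw : ∀ i ∈ s, 0 ≤ w i) (g : ι → K) :
    (∑ i ∈ s, w i) * ∑ i ∈ s, w i / (∑ j ∈ s, w j) * g i = ∑ i ∈ s, w i * g i := by
  by_cases hZ : ∑ j ∈ s, w j = 0
  · have hw0 : ∀ i ∈ s, w i = 0 := (sum_eq_zero_iff_of_nonneg hw).mp hZ
    rw [hZ, zero_mul, sum_eq_zero fun i hi => by rw [hw0 i hi, zero_mul]]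
  · rw [mul_sum]
    exact sum_congr rfl fun i _ => by field_simp

section Bayes

variable {S : Type*} [Fintype S] {L p q : S → ℝ}

/-- `bayesPosterior L p s = P(s|o)` for the likelihood `L s = P(o|s)` and the prior `p`. -/
noncomputable def bayesPosterior (L p : S → ℝ) (s : S) : ℝ :=
  L s * p s / ∑ s', L s' * p s'

open Real

theorem sum_mul_pos_of_pos (hL : ∀ s, 0 < L s) (hp : ∀ s, 0 < p s) (s : S) :
    0 < ∑ s', L s' * p s' :=
  lt_of_lt_of_le (mul_pos (hL s) (hp s))
    (single_le_sum (fun s' _ => (mul_pos (hL s') (hp s')).le) (mem_univ s))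

theorem bayesPosterior_pos (hL : ∀ s, 0 < L s) (hp : ∀ s, 0 < p s) (s : S) :
    0 < bayesPosterior L p s :=
  div_pos (mul_pos (hL s) (hp s)) (sum_mul_pos_of_pos hL hp s)

theorem log_div_bayesPosterior (hL : ∀ s, 0 < L s) (hp : ∀ s, 0 < p s)
    {x : ℝ} (hx : x ≠ 0) (s : S) :
    log (x / bayesPosterior L p s) = log (x / p s) - log (L s) + log (∑ s', L s' * p s') := by
  have hZ := (sum_mul_pos_of_pos hL hp s).ne'
  rw [bayesPosterior, div_div_eq_mul_div, log_div (mul_ne_zero hx hZ)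
      (mul_pos (hL s) (hp s)).ne', log_mul hx hZ, log_mul (hL s).ne' (hp s).ne',
    log_div hx (hp s).ne']
  ring

theorem sum_mul_sum_bayesPosterior_mul (hL : ∀ s, 0 < L s) (hq : ∀ s, 0 < q s)
    (g : S → ℝ) :
    (∑ s, L s * q s) * ∑ s, bayesPosterior L q s * g s = ∑ s, L s * q s * g s :=
  sum_mul_sum_div_sum_mul _ (fun s _ => (mul_pos (hL s) (hq s)).le) g

theorem evidenceBound_sub_logEvidence_sub_infoGain (hL : ∀ s, 0 < L s)
    (hp : ∀ s, 0 < p s) (hq : ∀ s, 0 < q s) :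
    (∑ s, L s * q s) * ∑ s, bayesPosterior L q s *
        log (bayesPosterior L q s / bayesPosterior L p s)
      - (∑ s, L s * q s) * log (∑ s', L s' * p s')
      - (∑ s, L s * q s) * ∑ s, bayesPosterior L q s * log (bayesPosterior L q s / q s)
    = ∑ s, L s * q s * (log (q s / p s) - log (L s)) := by
  rw [sum_mul_sum_bayesPosterior_mul hL hq, sum_mul_sum_bayesPosterior_mul hL hq, sum_mul,
    ← sum_sub_distrib, ← sum_sub_distrib]
  refine sum_congr rfl fun s _ => ?_
  have hr := (bayesPosterior_pos hL hq s).ne'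
  rw [log_div_bayesPosterior hL hp hr, ← log_div_sub_log_div hr (hp s).ne' (hq s).ne']
  ring

end Bayes

theorem expected_free_energy_decomposition_general
    {S O : Type*} [Fintype S] [Fintype O]
    (Plik : S → O → ℝ) (Pprior : S → ℝ) (Qs : S → ℝ)
    (hlik : ∀ s o, 0 < Plik s o) (hprior : ∀ s, 0 < Pprior s) (hQs : ∀ s, 0 < Qs s)
    (hlik1 : ∀ s, ∑ o, Plik s o = 1) :
    -- Risk + Ambiguity
    (∑ s, Qs s * Real.log (Qs s / Pprior s))
      + (∑ s, Qs s * (-∑ o, Plik s o * Real.log (Plik s o)))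
    =
    -- Expected evidence bound
    (∑ o, (∑ s, Plik s o * Qs s) *
        ∑ s, (Plik s o * Qs s / (∑ s', Plik s' o * Qs s')) *
          Real.log ((Plik s o * Qs s / (∑ s', Plik s' o * Qs s')) /
            (Plik s o * Pprior s / (∑ s', Plik s' o * Pprior s'))))
    -- minus Expected log evidence
    - (∑ o, (∑ s, Plik s o * Qs s) * Real.log (∑ s', Plik s' o * Pprior s'))
    -- minus Expected information gain
    - (∑ o, (∑ s, Plik s o * Qs s) *
        ∑ s, (Plik s o * Qs s / (∑ s', Plik s' o * Qs s')) *
          Real.log ((Plik s o * Qs s / (∑ s', Plik s' o * Qs s')) / Qs s)) := by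
  calc _ = ∑ s, ∑ o, Plik s o * Qs s * (Real.log (Qs s / Pprior s) - Real.log (Plik s o)) := by
          rw [← sum_add_distrib]
          refine sum_congr rfl fun s _ => ?_
          have hterm : ∀ o, Plik s o * Qs s * (Real.log (Qs s / Pprior s) - Real.log (Plik s o))
              = Qs s * Real.log (Qs s / Pprior s) * Plik s o
                - Qs s * (Plik s o * Real.log (Plik s o)) := fun o => by ring
          rw [sum_congr rfl fun o _ => hterm o, sum_sub_distrib, ← mul_sum, ← mul_sum, hlik1,
            mul_one]
          ring
    _ = ∑ o, ∑ s, Plik s o * Qs s * (Real.log (Qs s / Pprior s) - Real.log (Plik s o)) :=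
          sum_comm
    _ = _ := by
          rw [← sum_sub_distrib, ← sum_sub_distrib]
          exact sum_congr rfl fun o _ => (evidenceBound_sub_logEvidence_sub_infoGain
            (L := fun s => Plik s o) (fun s => hlik s o) hprior hQs).symm

/-- The expected free energy `G(π)` written as risk plus ambiguity equals the expected
evidence bound minus expected log evidence minus expected information gain:
`D_KL[Q(s|π)‖P(s)] + E_{Q(s|π)}[H[P(o|s)]]
 = E_Q[D_KL[Q(s|o,π)‖P(s|o)]] - E_Q[log P(o)] - E_Q[D_KL[Q(s|o,π)‖Q(s|π)]]`,
where `Q(o,s|π) = P(o|s)Q(s|π)`, `P(o) = ∑_s P(o|s)P(s)`, `P(s|o) = P(o|s)P(s)/P(o)`,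
`Q(o|π) = ∑_s P(o|s)Q(s|π)` and `Q(s|o,π) = P(o|s)Q(s|π)/Q(o|π)`. -/
theorem expected_free_energy_decomposition
    {S O : Type*} [Fintype S] [Fintype O]
    (Plik : S → O → ℝ) (Pprior : S → ℝ) (Qs : S → ℝ)
    (hlik : ∀ s o, 0 < Plik s o) (hprior : ∀ s, 0 < Pprior s) (hQs : ∀ s, 0 < Qs s)
    (hlik1 : ∀ s, ∑ o, Plik s o = 1) (hprior1 : ∑ s, Pprior s = 1) (hQs1 : ∑ s, Qs s = 1) :
    -- Risk + Ambiguity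
    (∑ s, Qs s * Real.log (Qs s / Pprior s))
      + (∑ s, Qs s * (-∑ o, Plik s o * Real.log (Plik s o)))
    =
    -- Expected evidence bound
    (∑ o, (∑ s, Plik s o * Qs s) *
        ∑ s, (Plik s o * Qs s / (∑ s', Plik s' o * Qs s')) *
          Real.log ((Plik s o * Qs s / (∑ s', Plik s' o * Qs s')) /
            (Plik s o * Pprior s / (∑ s', Plik s' o * Pprior s'))))
    -- minus Expected log evidence
    - (∑ o, (∑ s, Plik s o * Qs s) * Real.log (∑ s', Plik s' o * Pprior s'))
    -- minus Expected information gain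
    - (∑ o, (∑ s, Plik s o * Qs s) *
        ∑ s, (Plik s o * Qs s / (∑ s', Plik s' o * Qs s')) *
          Real.log ((Plik s o * Qs s / (∑ s', Plik s' o * Qs s')) / Qs s)) :=
  expected_free_energy_decomposition_general Plik Pprior Qs hlik hprior hQs hlik1
end

section
/- Steady-state lemma: For the Gibbs energy G(π;β) := D_KL[Q(s,A|π)||P(s,A)] - β E_{Q(o,s,A|π)}[log P(o|s,A)] with β := E_Q[log Q(π|s,A)]/E_Q[log P(o|s,A)], the equality E_Q[-log Q(π)] = E_Q[G(π;β)] holds if and only if D_KL[Q(s,A)||P(s,A)] = 0. -/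
/-!
The precision `β` is chosen so that `β · E_Q[log P(o|s,A)]` is exactly `E_Q[log Q(π|s,A)]`, so the
averaged Gibbs energy is `E_{Q(π)} D_KL[Q(s,A|π)‖P(s,A)] - E_Q[log Q(π|s,A)]`. Bayes' rule
`Q(π|s,A) = Q(s,A|π) Q(π) / Q(s,A)` turns this into `H[Q(π)] + D_KL[Q(s,A)‖P(s,A)]`, and
`H[Q(π)] = E_Q[-log Q(π)]`.
-/

open BigOperators Finset

lemma sum_mul_sub_div_mul_of_sum_mul_eq {ι : Type*} [Fintype ι] (w A L : ι → ℝ) (N : ℝ)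
    {D : ℝ} (hD : D ≠ 0) (hwL : ∑ i, w i * L i = D) :
    ∑ i, w i * (A i - N / D * L i) = ∑ i, w i * A i - N := by
  simp only [mul_sub, Finset.sum_sub_distrib, mul_left_comm _ (N / D), ← Finset.mul_sum, hwL,
    div_mul_cancel₀ _ hD]

lemma Real.log_div_sub_log_mul_div {c p q m : ℝ} (hc : c ≠ 0) (hp : p ≠ 0) (hq : q ≠ 0)
    (hm : m ≠ 0) : log (c / p) - log (c * q / m) = log (m / p) - log q := by
  rw [log_div hc hp, log_div (mul_ne_zero hc hq) hm, log_mul hc hq, log_div hm hp]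
  ring

section Mixture

variable {ι X : Type*} [Fintype ι] [Fintype X]

lemma sum_sum_mul_eq_sum_marginal_mul (q : ι → ℝ) (c : ι → X → ℝ) (f : X → ℝ) :
    ∑ i, ∑ x, q i * c i x * f x = ∑ x, (∑ i, c i x * q i) * f x := by
  rw [Finset.sum_comm]
  simp only [Finset.sum_mul, mul_comm (q _)]

lemma sum_sum_mul_eq_sum_mul_of_sum_eq_one (q : ι → ℝ) (c : ι → X → ℝ) (g : ι → ℝ)
    (hc1 : ∀ i, ∑ x, c i x = 1) :
    ∑ i, ∑ x, q i * c i x * g i = ∑ i, q i * g i := by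
  refine Finset.sum_congr rfl fun i _ => ?_
  simp only [← Finset.sum_mul, ← Finset.mul_sum, hc1, mul_one]

lemma sum_mul_klSum_sub_sum_mul_log_posterior (q : ι → ℝ) (c : ι → X → ℝ) (p : X → ℝ)
    (hq : ∀ i, 0 < q i) (hc : ∀ i x, 0 < c i x) (hp : ∀ x, 0 < p x)
    (hc1 : ∀ i, ∑ x, c i x = 1) :
    ∑ i, q i * ∑ x, c i x * Real.log (c i x / p x)
        - ∑ i, ∑ x, q i * c i x * Real.log (c i x * q i / ∑ j, c j x * q j)
      = ∑ i, q i * (-Real.log (q i))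
        + ∑ x, (∑ i, c i x * q i) * Real.log ((∑ i, c i x * q i) / p x) := by
  have hm : ∀ i x, 0 < ∑ j, c j x * q j := fun i x =>
    (mul_pos (hc i x) (hq i)).trans_le <| Finset.single_le_sum
      (fun j _ => (mul_pos (hc j x) (hq j)).le) (Finset.mem_univ i)
  have hlog : ∀ i x, Real.log (c i x / p x) - Real.log (c i x * q i / ∑ j, c j x * q j)
      = Real.log ((∑ j, c j x * q j) / p x) - Real.log (q i) := fun i x =>
    Real.log_div_sub_log_mul_div (hc i x).ne' (hp x).ne' (hq i).ne' (hm i x).ne'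
  calc ∑ i, q i * ∑ x, c i x * Real.log (c i x / p x)
          - ∑ i, ∑ x, q i * c i x * Real.log (c i x * q i / ∑ j, c j x * q j)
      = ∑ i, ∑ x, q i * c i x * Real.log ((∑ j, c j x * q j) / p x)
          - ∑ i, ∑ x, q i * c i x * Real.log (q i) := by
        simp only [Finset.mul_sum, ← Finset.sum_sub_distrib, ← mul_assoc, ← mul_sub, hlog]
    _ = _ := by
        rw [sum_sum_mul_eq_sum_marginal_mul, sum_sum_mul_eq_sum_mul_of_sum_eq_one q c _ hc1]
        simp only [mul_neg, Finset.sum_neg_distrib]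
        ring

end Mixture

theorem steady_state_lemma_general
    {Pol St Par Obs : Type*} [Fintype Pol] [Fintype St] [Fintype Par] [Fintype Obs]
    (Qpi : Pol → ℝ) (Qcond : Pol → St → Par → ℝ)
    (Plik : St → Par → Obs → ℝ) (Ptar : St → Par → ℝ)
    (hQpi : ∀ π, 0 < Qpi π) (hQcond : ∀ π s a, 0 < Qcond π s a)
    (hPtar : ∀ s a, 0 < Ptar s a)
    (hQcond1 : ∀ π, ∑ s, ∑ a, Qcond π s a = 1)
    (hden : (∑ π, ∑ s, ∑ a, ∑ o, Qpi π * Qcond π s a * Plik s a o * Real.log (Plik s a o)) ≠ 0) :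
    -- E_Q[-log Q(π)] = E_Q[G(π;β)]
    ((∑ π, Qpi π * (-Real.log (Qpi π)))
      = ∑ π, Qpi π *
          ((∑ s, ∑ a, Qcond π s a * Real.log (Qcond π s a / Ptar s a))
            - ((∑ π', ∑ s, ∑ a, Qpi π' * Qcond π' s a *
                  Real.log (Qcond π' s a * Qpi π' / (∑ π'', Qcond π'' s a * Qpi π''))) /
               (∑ π', ∑ s, ∑ a, ∑ o, Qpi π' * Qcond π' s a * Plik s a o *
                  Real.log (Plik s a o)))
              * (∑ s, ∑ a, ∑ o, Qcond π s a * Plik s a o * Real.log (Plik s a o))))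
    ↔
    (∑ s, ∑ a, (∑ π, Qcond π s a * Qpi π) *
        Real.log ((∑ π, Qcond π s a * Qpi π) / Ptar s a)) = 0 := by
  have hβ := sum_mul_sub_div_mul_of_sum_mul_eq Qpi
    (fun π => ∑ s, ∑ a, Qcond π s a * Real.log (Qcond π s a / Ptar s a))
    (fun π => ∑ s, ∑ a, ∑ o, Qcond π s a * Plik s a o * Real.log (Plik s a o))
    (∑ π, ∑ s, ∑ a, Qpi π * Qcond π s a *
        Real.log (Qcond π s a * Qpi π / ∑ π', Qcond π' s a * Qpi π'))
    hden (by simp only [Finset.mul_sum, mul_assoc])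
  have hmix := sum_mul_klSum_sub_sum_mul_log_posterior Qpi (fun π x => Qcond π x.1 x.2)
    (fun x => Ptar x.1 x.2) hQpi (fun π x => hQcond π x.1 x.2) (fun x => hPtar x.1 x.2)
    (fun π => (Fintype.sum_prod_type _).trans (hQcond1 π))
  simp only [Fintype.sum_prod_type] at hmix
  rw [hβ, hmix, left_eq_add]

/-- Steady-state lemma. With `Q(o,s,A,π) = P(o|s,A) Q(s,A|π) Q(π)`, Gibbs energy
`G(π;β) = D_KL[Q(s,A|π)‖P(s,A)] - β E_{Q(o,s,A|π)}[log P(o|s,A)]` and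
`β = E_Q[log Q(π|s,A)] / E_Q[log P(o|s,A)]`, the surprisal over policies and the
Gibbs energy are equal on average under `Q` iff the system reaches steady state:
`E_Q[-log Q(π)] = E_Q[G(π;β)] ↔ D_KL[Q(s,A)‖P(s,A)] = 0`. -/
theorem steady_state_lemma
    {Pol St Par Obs : Type*} [Fintype Pol] [Fintype St] [Fintype Par] [Fintype Obs]
    (Qpi : Pol → ℝ) (Qcond : Pol → St → Par → ℝ)
    (Plik : St → Par → Obs → ℝ) (Ptar : St → Par → ℝ)
    (hQpi : ∀ π, 0 < Qpi π) (hQcond : ∀ π s a, 0 < Qcond π s a)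
    (hPlik : ∀ s a o, 0 < Plik s a o) (hPtar : ∀ s a, 0 < Ptar s a)
    (hQpi1 : ∑ π, Qpi π = 1) (hQcond1 : ∀ π, ∑ s, ∑ a, Qcond π s a = 1)
    (hPlik1 : ∀ s a, ∑ o, Plik s a o = 1) (hPtar1 : ∑ s, ∑ a, Ptar s a = 1)
    (hden : (∑ π, ∑ s, ∑ a, ∑ o, Qpi π * Qcond π s a * Plik s a o * Real.log (Plik s a o)) ≠ 0) :
    -- E_Q[-log Q(π)] = E_Q[G(π;β)]
    ((∑ π, Qpi π * (-Real.log (Qpi π)))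
      = ∑ π, Qpi π *
          ((∑ s, ∑ a, Qcond π s a * Real.log (Qcond π s a / Ptar s a))
            - ((∑ π', ∑ s, ∑ a, Qpi π' * Qcond π' s a *
                  Real.log (Qcond π' s a * Qpi π' / (∑ π'', Qcond π'' s a * Qpi π''))) /
               (∑ π', ∑ s, ∑ a, ∑ o, Qpi π' * Qcond π' s a * Plik s a o *
                  Real.log (Plik s a o)))
              * (∑ s, ∑ a, ∑ o, Qcond π s a * Plik s a o * Real.log (Plik s a o))))
    ↔
    (∑ s, ∑ a, (∑ π, Qcond π s a * Qpi π) *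
        Real.log ((∑ π, Qcond π s a * Qpi π) / Ptar s a)) = 0 :=
  steady_state_lemma_general Qpi Qcond Plik Ptar hQpi hQcond hPtar hQcond1 hden
end
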